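/- Let M₁, M₂ ∈ ℝ^{n×n} be symmetric with eigenvalues λ₁(M₁) ≥ … ≥ λ_n(M₁) and λ₁(M₂) ≥ … ≥ λ_n(M₂). Then √(Σᵢ (λᵢ(M₁) − λᵢ(M₂))²) ≤ ‖M₁ − M₂‖_F; consequently, if M₁ ≠ 0, the relative eigenvalue deviation √(Σᵢ(λᵢ(M₁)−λᵢ(M₂))²)/√(Σᵢ λᵢ(M₁)²) is at most ‖M₁−M₂‖_F/‖M₁‖_F. -/
import Mathlib
open Matrix Real Finset

/-- Frobenius norm. -/
noncomputable def frob {n : ℕ} (M : Matrix (Fin n) (Fin n) ℝ) : ℝ :=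
  Real.sqrt (∑ i, ∑ j, (M i j) ^ 2)


lemma perm_entry {n : ℕ} (σ : Equiv.Perm (Fin n)) (i j : Fin n) :
    (σ.permMatrix ℝ) i j = if σ i = j then 1 else 0 := by
  simp [Equiv.Perm.permMatrix, PEquiv.toMatrix, Equiv.toPEquiv]

lemma ds_sum_le {n : ℕ} (S : Matrix (Fin n) (Fin n) ℝ)
    (hS : S ∈ doublyStochastic ℝ (Fin n)) (f g : Fin n → ℝ)
    (hf : Antitone f) (hg : Antitone g) :
    ∑ i, ∑ j, f i * g j * S i j ≤ ∑ i, f i * g i := by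
  obtain ⟨w, hw0, hw1, hws⟩ := exists_eq_sum_perm_of_mem_doublyStochastic hS
  have hentry : ∀ i j, S i j = ∑ σ : Equiv.Perm (Fin n), w σ * (σ.permMatrix ℝ) i j := by
    intro i j
    rw [← hws]
    simp [Finset.sum_apply, Matrix.sum_apply]
  have key : ∀ i, ∑ j, f i * g j * S i j = ∑ σ : Equiv.Perm (Fin n), w σ * (f i * g (σ i)) := by
    intro i
    simp_rw [hentry, Finset.mul_sum]
    rw [Finset.sum_comm]
    refine Finset.sum_congr rfl fun σ _ => ?_
    rw [Finset.sum_eq_single (σ i)]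
    · simp [perm_entry, Equiv.toPEquiv_apply]; ring
    · intro j _ hj; simp [perm_entry, Equiv.toPEquiv_apply, hj.symm]
    · simp
  calc ∑ i, ∑ j, f i * g j * S i j
      = ∑ σ : Equiv.Perm (Fin n), w σ * ∑ i, f i * g (σ i) := by
        simp_rw [key, Finset.mul_sum]
        exact Finset.sum_comm
    _ ≤ ∑ σ : Equiv.Perm (Fin n), w σ * ∑ i, f i * g i := by
        refine Finset.sum_le_sum fun σ _ => mul_le_mul_of_nonneg_left ?_ (hw0 σ)
        simpa [smul_eq_mul] using (hf.monovary hg).sum_smul_comp_perm_le_sum_smul (σ := σ)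
    _ = ∑ i, f i * g i := by rw [← Finset.sum_mul, hw1, one_mul]

lemma trace_diag_conj {n : ℕ} (D E : Fin n → ℝ) (W : Matrix (Fin n) (Fin n) ℝ) :
    Matrix.trace (Matrix.diagonal D * W * Matrix.diagonal E * star W) =
      ∑ i, ∑ j, D i * E j * (W i j) ^ 2 := by
  simp [Matrix.trace, Matrix.diag, Matrix.mul_apply, Matrix.diagonal_apply, Matrix.star_apply,
    Finset.sum_mul, Finset.mul_sum, Finset.sum_ite_eq, Finset.sum_ite_eq']
  refine Finset.sum_congr rfl fun i _ => Finset.sum_congr rfl fun j _ => by ring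

lemma trace_mul_herm {n : ℕ} (M1 M2 : Matrix (Fin n) (Fin n) ℝ) (h1 : M1.IsHermitian) (h2 : M2.IsHermitian) :
    Matrix.trace (M1 * M2) = ∑ i, ∑ j, h1.eigenvalues i * h2.eigenvalues j *
      ((star (h1.eigenvectorUnitary : Matrix (Fin n) (Fin n) ℝ) *
        (h2.eigenvectorUnitary : Matrix (Fin n) (Fin n) ℝ)) i j) ^ 2 := by
  set U1 := (h1.eigenvectorUnitary : Matrix (Fin n) (Fin n) ℝ) with hU1
  set U2 := (h2.eigenvectorUnitary : Matrix (Fin n) (Fin n) ℝ) with hU2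
  have e1 : M1 = U1 * Matrix.diagonal h1.eigenvalues * star U1 := by
    simpa using h1.spectral_theorem
  have e2 : M2 = U2 * Matrix.diagonal h2.eigenvalues * star U2 := by
    simpa using h2.spectral_theorem
  rw [← trace_diag_conj h1.eigenvalues h2.eigenvalues (star U1 * U2)]
  rw [Matrix.star_mul, star_star]
  conv_lhs => rw [e1, e2]
  rw [show U1 * Matrix.diagonal h1.eigenvalues * star U1 *
      (U2 * Matrix.diagonal h2.eigenvalues * star U2) =
      U1 * (Matrix.diagonal h1.eigenvalues * star U1 *
      (U2 * Matrix.diagonal h2.eigenvalues * star U2)) from by noncomm_ring]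
  rw [Matrix.trace_mul_comm]
  congr 1
  noncomm_ring

lemma sq_ds_mem {n : ℕ} (W : Matrix (Fin n) (Fin n) ℝ)
    (h1 : W * star W = 1) (h2 : star W * W = 1) (σ1 σ2 : Equiv.Perm (Fin n)) :
    (Matrix.of fun i j => (W (σ1 i) (σ2 j)) ^ 2) ∈ doublyStochastic ℝ (Fin n) := by
  rw [mem_doublyStochastic_iff_sum]
  refine ⟨fun i j => sq_nonneg _, fun i => ?_, fun j => ?_⟩
  · simp only [Matrix.of_apply]
    rw [Equiv.sum_comp σ2 (fun j => (W (σ1 i) j) ^ 2)]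
    have h := congrArg (fun M => M (σ1 i) (σ1 i)) h1
    simpa [Matrix.mul_apply, Matrix.star_apply, sq] using h
  · simp only [Matrix.of_apply]
    rw [Equiv.sum_comp σ1 (fun i => (W i (σ2 j)) ^ 2)]
    have h := congrArg (fun M => M (σ2 j) (σ2 j)) h2
    simpa [Matrix.mul_apply, Matrix.star_apply, sq] using h

lemma frob_sq_eq_trace {n : ℕ} (M : Matrix (Fin n) (Fin n) ℝ) (h : M.IsHermitian) :
    ∑ i, ∑ j, M i j ^ 2 = Matrix.trace (M * M) := by
  simp only [Matrix.trace, Matrix.diag, Matrix.mul_apply]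
  refine Finset.sum_congr rfl fun i _ => Finset.sum_congr rfl fun j _ => ?_
  have := h.apply j i
  simp only [star_trivial] at this
  rw [sq, this]


/-- Hoffman–Wielandt: for symmetric `M₁, M₂` with eigenvalues listed in
nonincreasing order (with multiplicity), the `ℓ²` distance of the spectra is
bounded by `‖M₁ − M₂‖_F`; consequently the relative eigenvalue deviation is
bounded by the relative Frobenius distance. -/
theorem stmt_15 {n : ℕ} (M1 M2 : Matrix (Fin n) (Fin n) ℝ)
    (hM1 : M1.IsHermitian) (hM2 : M2.IsHermitian)
    (μ1 μ2 : Fin n → ℝ)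
    (hperm1 : ∃ σ : Equiv.Perm (Fin n), μ1 = hM1.eigenvalues ∘ σ)
    (hperm2 : ∃ σ : Equiv.Perm (Fin n), μ2 = hM2.eigenvalues ∘ σ)
    (hanti1 : Antitone μ1) (hanti2 : Antitone μ2) :
    Real.sqrt (∑ i, (μ1 i - μ2 i) ^ 2) ≤ frob (M1 - M2) ∧
    (M1 ≠ 0 →
      Real.sqrt (∑ i, (μ1 i - μ2 i) ^ 2) / Real.sqrt (∑ i, (μ1 i) ^ 2) ≤
        frob (M1 - M2) / frob M1) := by
  obtain ⟨σ1, hσ1⟩ := hperm1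
  obtain ⟨σ2, hσ2⟩ := hperm2
  set U1 := (hM1.eigenvectorUnitary : Matrix (Fin n) (Fin n) ℝ) with hU1d
  set U2 := (hM2.eigenvectorUnitary : Matrix (Fin n) (Fin n) ℝ) with hU2d
  have h1 : star U1 * U1 = 1 := hM1.eigenvectorUnitary.prop.1
  have h1' : U1 * star U1 = 1 := hM1.eigenvectorUnitary.prop.2
  have h2 : star U2 * U2 = 1 := hM2.eigenvectorUnitary.prop.1
  have h2' : U2 * star U2 = 1 := hM2.eigenvectorUnitary.prop.2
  set W := star U1 * U2 with hWd
  have hWs : star W = star U2 * U1 := by rw [hWd, Matrix.star_mul, star_star]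
  have hWW : W * star W = 1 := by
    rw [hWs, hWd, mul_assoc, ← mul_assoc U2, h2', one_mul, h1]
  have hWsW : star W * W = 1 := by
    rw [hWs, hWd, mul_assoc, ← mul_assoc U1, h1', one_mul, h2]
  have hds := sq_ds_mem W hWW hWsW σ1 σ2
  -- trace of M1*M2 bounded by sorted eigenvalue inner product
  have hkey : Matrix.trace (M1 * M2) ≤ ∑ i, μ1 i * μ2 i := by
    rw [trace_mul_herm M1 M2 hM1 hM2]
    have hre : ∑ i, ∑ j, hM1.eigenvalues i * hM2.eigenvalues j * (W i j) ^ 2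
        = ∑ i, ∑ j, μ1 i * μ2 j * ((Matrix.of fun i j => (W (σ1 i) (σ2 j)) ^ 2) i j) := by
      rw [← Equiv.sum_comp σ1
        (fun i => ∑ j, hM1.eigenvalues i * hM2.eigenvalues j * (W i j) ^ 2)]
      refine Finset.sum_congr rfl fun i _ => ?_
      rw [← Equiv.sum_comp σ2
        (fun j => hM1.eigenvalues (σ1 i) * hM2.eigenvalues j * (W (σ1 i) j) ^ 2)]
      simp [hσ1, hσ2]
    rw [show (star U1 * U2) = W from rfl, hre]
    exact ds_sum_le _ hds μ1 μ2 hanti1 hanti2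
  -- traces of squares
  have tsq1 : Matrix.trace (M1 * M1) = ∑ i, μ1 i ^ 2 := by
    rw [trace_mul_herm M1 M1 hM1 hM1, show (star U1 * U1) = 1 from h1]
    rw [← Equiv.sum_comp σ1 (fun i => ∑ j, hM1.eigenvalues i * hM1.eigenvalues j * ((1 : Matrix (Fin n) (Fin n) ℝ) i j) ^ 2)]
    refine Finset.sum_congr rfl fun i _ => ?_
    rw [← Equiv.sum_comp σ1 (fun j => hM1.eigenvalues (σ1 i) * hM1.eigenvalues j * ((1 : Matrix (Fin n) (Fin n) ℝ) (σ1 i) j) ^ 2)]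
    rw [Finset.sum_eq_single i]
    · simp [hσ1, Matrix.one_apply, sq]
    · intro j _ hj
      simp [Matrix.one_apply, Ne.symm hj]
    · simp
  have tsq2 : Matrix.trace (M2 * M2) = ∑ i, μ2 i ^ 2 := by
    rw [trace_mul_herm M2 M2 hM2 hM2, show (star U2 * U2) = 1 from h2]
    rw [← Equiv.sum_comp σ2 (fun i => ∑ j, hM2.eigenvalues i * hM2.eigenvalues j * ((1 : Matrix (Fin n) (Fin n) ℝ) i j) ^ 2)]
    refine Finset.sum_congr rfl fun i _ => ?_
    rw [← Equiv.sum_comp σ2 (fun j => hM2.eigenvalues (σ2 i) * hM2.eigenvalues j * ((1 : Matrix (Fin n) (Fin n) ℝ) (σ2 i) j) ^ 2)]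
    rw [Finset.sum_eq_single i]
    · simp [hσ2, Matrix.one_apply, sq]
    · intro j _ hj
      simp [Matrix.one_apply, Ne.symm hj]
    · simp
  -- main inequality on sums
  have main : ∑ i, (μ1 i - μ2 i) ^ 2 ≤ ∑ i, ∑ j, ((M1 - M2) i j) ^ 2 := by
    rw [frob_sq_eq_trace _ (hM1.sub hM2)]
    have expand : Matrix.trace ((M1 - M2) * (M1 - M2)) =
        Matrix.trace (M1 * M1) - 2 * Matrix.trace (M1 * M2) + Matrix.trace (M2 * M2) := by
      rw [sub_mul, mul_sub, mul_sub, Matrix.trace_sub, Matrix.trace_sub, Matrix.trace_sub,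
        Matrix.trace_mul_comm M2 M1]
      ring
    rw [expand, tsq1, tsq2]
    have lhs_eq : ∑ i, (μ1 i - μ2 i) ^ 2 =
        ∑ i, μ1 i ^ 2 - 2 * ∑ i, μ1 i * μ2 i + ∑ i, μ2 i ^ 2 := by
      rw [Finset.mul_sum, ← Finset.sum_sub_distrib, ← Finset.sum_add_distrib]
      exact Finset.sum_congr rfl fun i _ => by ring
    rw [lhs_eq]
    linarith
  have part1 : Real.sqrt (∑ i, (μ1 i - μ2 i) ^ 2) ≤ frob (M1 - M2) :=
    Real.sqrt_le_sqrt main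
  refine ⟨part1, fun hne => ?_⟩
  have hμsq : ∑ i, ∑ j, (M1 i j) ^ 2 = ∑ i, μ1 i ^ 2 :=
    (frob_sq_eq_trace M1 hM1).trans tsq1
  have hden : Real.sqrt (∑ i, (μ1 i) ^ 2) = frob M1 := by rw [frob, hμsq]
  rw [hden]
  have hpos : 0 < frob M1 := by
    rw [frob]
    apply Real.sqrt_pos.mpr
    have hex : ∃ i j, M1 i j ≠ 0 := by
      by_contra h
      push_neg at h
      exact hne (Matrix.ext fun i j => by simpa using h i j)
    obtain ⟨i, j, hij⟩ := hex
    refine Finset.sum_pos' (fun i _ => Finset.sum_nonneg fun j _ => sq_nonneg _)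
      ⟨i, Finset.mem_univ i, Finset.sum_pos' (fun j _ => sq_nonneg _)
      ⟨j, Finset.mem_univ j, lt_of_le_of_ne (sq_nonneg _) (Ne.symm (pow_ne_zero 2 hij))⟩⟩
  gcongr
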